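/- Dimension of the future subgroup: let S be a subspace of V = (𝔽₂²)ⁿ and 0 ≤ i ≤ n. Then the future subgroup Cᵢᶠ = {P ∈ S^⊥ : πᵢ(P) = 0} has 𝔽₂-dimension 2(n−i) − dim (id − πᵢ)(S), where (id − πᵢ)(S) is the image of S under the map Q ↦ Q − πᵢ(Q). -/

import Mathlib

/-- `V = (𝔽₂²)ⁿ`, the additive group underlying the effective Pauli group `Gₙ`. -/
abbrev PV (n : ℕ) := Fin n → ZMod 2 × ZMod 2

/-- The symplectic form `ω(v,w) = Σᵢ (aᵢb′ᵢ + a′ᵢbᵢ)` over `𝔽₂`. -/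
def sympOmega {n : ℕ} (v w : PV n) : ZMod 2 :=
  ∑ i, ((v i).1 * (w i).2 + (w i).1 * (v i).2)

lemma sympOmega_add_left {n : ℕ} (a b w : PV n) :
    sympOmega (a + b) w = sympOmega a w + sympOmega b w := by
  unfold sympOmega
  rw [← Finset.sum_add_distrib]
  refine Finset.sum_congr rfl fun i _ => ?_
  simp [Prod.fst_add, Prod.snd_add, add_mul, mul_add]
  ring

lemma sympOmega_smul_left {n : ℕ} (c : ZMod 2) (a w : PV n) :
    sympOmega (c • a) w = c * sympOmega a w := by
  unfold sympOmega
  rw [Finset.mul_sum]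
  refine Finset.sum_congr rfl fun i _ => ?_
  simp [Prod.smul_fst, Prod.smul_snd, smul_eq_mul]
  ring

/-- The symplectic orthogonal `S^⊥ = {P ∈ V : ω(P,Q) = 0 for all Q ∈ S}`. -/
def sPerp {n : ℕ} (S : Submodule (ZMod 2) (PV n)) : Submodule (ZMod 2) (PV n) where
  carrier := {P | ∀ Q ∈ S, sympOmega P Q = 0}
  add_mem' := by
    intro a b ha hb Q hQ
    rw [sympOmega_add_left, ha Q hQ, hb Q hQ, add_zero]
  zero_mem' := by
    intro Q hQ
    simp [sympOmega]
  smul_mem' := by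
    intro c a ha Q hQ
    rw [sympOmega_smul_left, ha Q hQ, mul_zero]

/-- The truncation map `πᵢ : V → V`, `(P₁,…,Pₙ) ↦ (P₁,…,Pᵢ,0,…,0)`. -/
def trunc (n i : ℕ) : PV n →ₗ[ZMod 2] PV n where
  toFun v := fun j => if (j : ℕ) < i then v j else 0
  map_add' := by
    intro a b
    funext j
    by_cases h : (j : ℕ) < i <;> simp [h]
  map_smul' := by
    intro c a
    funext j
    by_cases h : (j : ℕ) < i <;> simp [h]

/- ---------------- auxiliary lemmas ---------------- -/

lemma sympOmega_comm {n : ℕ} (v w : PV n) : sympOmega v w = sympOmega w v := by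
  unfold sympOmega
  refine Finset.sum_congr rfl fun i _ => ?_
  ring

/-- The symplectic form as a bilinear form. -/
def sympB (n : ℕ) : LinearMap.BilinForm (ZMod 2) (PV n) :=
  LinearMap.mk₂ (ZMod 2) sympOmega sympOmega_add_left sympOmega_smul_left
    (fun a b c => by
      rw [sympOmega_comm, sympOmega_add_left, sympOmega_comm b, sympOmega_comm c])
    (fun c a b => by
      rw [sympOmega_comm, sympOmega_smul_left, sympOmega_comm, smul_eq_mul])

@[simp] lemma sympB_apply {n : ℕ} (v w : PV n) : sympB n v w = sympOmega v w := rfl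

lemma trunc_apply {n i : ℕ} (v : PV n) (j : Fin n) :
    trunc n i v j = if (j : ℕ) < i then v j else 0 := rfl

lemma mem_ker_trunc {n i : ℕ} (v : PV n) :
    v ∈ LinearMap.ker (trunc n i) ↔ ∀ j : Fin n, (j : ℕ) < i → v j = 0 := by
  rw [LinearMap.mem_ker]
  constructor
  · intro h j hj
    have := congrFun h j
    simpa [trunc_apply, hj] using this
  · intro h
    funext j
    by_cases hj : (j : ℕ) < i <;> simp [trunc_apply, hj, h]

lemma sympOmega_trunc {n i : ℕ} {v : PV n} (hv : v ∈ LinearMap.ker (trunc n i))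
    (w : PV n) : sympOmega v (trunc n i w) = 0 := by
  unfold sympOmega
  apply Finset.sum_eq_zero
  intro j _
  by_cases hj : (j : ℕ) < i
  · rw [(mem_ker_trunc v).mp hv j hj]; simp
  · have h0 : trunc n i w j = 0 := by simp [trunc_apply, hj]
    rw [h0]; simp

lemma sympOmega_single {n : ℕ} (v : PV n) (j : Fin n) (x : ZMod 2 × ZMod 2) :
    sympOmega v (Pi.single j x) = (v j).1 * x.2 + x.1 * (v j).2 := by
  unfold sympOmega
  rw [Finset.sum_eq_single j]
  · simp
  · intro k _ hk
    simp [Pi.single_eq_of_ne hk]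
  · simp

lemma sympOmega_nondeg_on_ker {n i : ℕ} {v : PV n}
    (hv : v ∈ LinearMap.ker (trunc n i))
    (h : ∀ w ∈ LinearMap.ker (trunc n i), sympOmega v w = 0) : v = 0 := by
  funext j
  by_cases hj : (j : ℕ) < i
  · exact (mem_ker_trunc v).mp hv j hj
  · have hmem : ∀ x : ZMod 2 × ZMod 2, Pi.single j x ∈ LinearMap.ker (trunc n i) := by
      intro x
      rw [mem_ker_trunc]
      intro k hk
      have hkj : k ≠ j := by rintro rfl; exact hj hk
      exact Pi.single_eq_of_ne (M := fun _ : Fin n => ZMod 2 × ZMod 2) hkj x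
    have h1 := h _ (hmem (0, 1))
    have h2 := h _ (hmem (1, 0))
    rw [sympOmega_single] at h1 h2
    simp only [mul_one, mul_zero, zero_mul, one_mul, add_zero, zero_add] at h1 h2
    exact Prod.ext h1 h2

lemma finrank_ker_trunc {n i : ℕ} (hi : i ≤ n) :
    Module.finrank (ZMod 2) (LinearMap.ker (trunc n i)) = 2 * (n - i) := by
  classical
  set r := LinearMap.funLeft (ZMod 2) (ZMod 2 × ZMod 2) (Fin.castLE hi) with hr
  have hker : LinearMap.ker r = LinearMap.ker (trunc n i) := by
    ext v
    rw [LinearMap.mem_ker, mem_ker_trunc]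
    constructor
    · intro h j hj
      have := congrFun h ⟨(j : ℕ), hj⟩
      simpa [hr, LinearMap.funLeft_apply, Fin.castLE] using this
    · intro h
      funext k
      exact h (Fin.castLE hi k) (by simpa using k.isLt)
  have hsurj : Function.Surjective r :=
    LinearMap.funLeft_surjective_of_injective _ _ _ (Fin.castLE_injective hi)
  have hrn := LinearMap.finrank_range_add_finrank_ker r
  rw [LinearMap.range_eq_top.mpr hsurj, hker, finrank_top] at hrn
  have hcod : Module.finrank (ZMod 2) (Fin i → ZMod 2 × ZMod 2) = 2 * i := by
    rw [Module.finrank_pi_fintype]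
    simp [Module.finrank_prod]
    ring
  have hdom : Module.finrank (ZMod 2) (PV n) = 2 * n := by
    rw [Module.finrank_pi_fintype]
    simp [Module.finrank_prod]
    ring
  rw [hcod, hdom] at hrn
  have h2 : (2:ℕ) * (n - i) = 2 * n - 2 * i := by omega
  rw [h2]
  exact Nat.eq_sub_of_add_eq' hrn

set_option maxHeartbeats 1600000 in
/-- Dimension of the future subgroup: Cᵢᶠ = {P ∈ S^⊥ : πᵢ(P) = 0} has 𝔽₂-dimension
2(n−i) − dim (id − πᵢ)(S). -/
theorem future_subgroup_dim (n : ℕ) (S : Submodule (ZMod 2) (PV n))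
    (i : ℕ) (hi : i ≤ n) :
    Module.finrank (ZMod 2) ↥(sPerp S ⊓ LinearMap.ker (trunc n i))
      = 2 * (n - i)
        - Module.finrank (ZMod 2) ↥(S.map (LinearMap.id - trunc n i)) := by
  classical
  set W : Submodule (ZMod 2) (PV n) := LinearMap.ker (trunc n i) with hWdef
  set TS : Submodule (ZMod 2) (PV n) := S.map (LinearMap.id - trunc n i) with hTSdef
  have hTSW : TS ≤ W := by
    rintro _ ⟨q, hq, rfl⟩
    rw [hWdef, mem_ker_trunc]
    intro j hj
    simp [LinearMap.sub_apply, trunc_apply, hj]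
  set F : PV n →ₗ[ZMod 2] Module.Dual (ZMod 2) TS :=
    (TS.subtype).dualMap ∘ₗ sympB n with hFdef
  have hF_apply : ∀ (P : PV n) (Q : TS), F P Q = sympOmega P (Q : PV n) := fun _ _ => rfl
  have hCeq : sPerp S ⊓ W = LinearMap.ker F ⊓ W := by
    ext P
    simp only [Submodule.mem_inf]
    constructor
    · rintro ⟨hP, hPW⟩
      refine ⟨LinearMap.mem_ker.mpr ?_, hPW⟩
      refine LinearMap.ext fun Q => ?_
      obtain ⟨q, hq, hq2⟩ := Q.2
      rw [hF_apply]
      have hcoe : (Q : PV n) = q - trunc n i q := by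
        rw [← hq2]; simp [LinearMap.sub_apply]
      rw [hcoe]
      have hsub : sympOmega P (q - trunc n i q)
          = sympOmega P q - sympOmega P (trunc n i q) := map_sub (sympB n P) _ _
      rw [hsub, hP q hq, sympOmega_trunc hPW, sub_zero]
      rfl
    · rintro ⟨hP, hPW⟩
      refine ⟨fun q hq => ?_, hPW⟩
      have hq' : (q - trunc n i q) ∈ TS := ⟨q, hq, by simp [LinearMap.sub_apply]⟩
      have h1 : sympOmega P (q - trunc n i q) = 0 := by
        have := congrFun (congrArg DFunLike.coe (LinearMap.mem_ker.mp hP))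
          (⟨_, hq'⟩ : TS)
        simpa [hF_apply] using this
      have h2 : sympOmega P (trunc n i q) = 0 := sympOmega_trunc hPW q
      have hadd : sympOmega P ((q - trunc n i q) + trunc n i q)
          = sympOmega P (q - trunc n i q) + sympOmega P (trunc n i q) :=
        map_add (sympB n P) _ _
      have hq3 : (q - trunc n i q) + trunc n i q = q := by abel
      rw [hq3] at hadd
      rw [hadd, h1, h2, add_zero]
  set f : W →ₗ[ZMod 2] Module.Dual (ZMod 2) TS := F.domRestrict W with hfdef
  have hkerf : LinearMap.ker f = Submodule.comap W.subtype (LinearMap.ker F ⊓ W) := by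
    rw [hfdef, LinearMap.ker_domRestrict, Submodule.comap_inf, Submodule.comap_subtype_self,
      inf_top_eq]
  have hkerf_rank : Module.finrank (ZMod 2) (LinearMap.ker f)
      = Module.finrank (ZMod 2) (LinearMap.ker F ⊓ W : Submodule (ZMod 2) (PV n)) := by
    rw [hkerf]
    exact (Submodule.comapSubtypeEquivOfLe inf_le_right).finrank_eq
  set Bw : LinearMap.BilinForm (ZMod 2) W := (sympB n).compl₁₂ W.subtype W.subtype with hBw
  have hBw_apply : ∀ P Q : W, Bw P Q = sympOmega (P : PV n) (Q : PV n) := fun _ _ => rfl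
  have hBwnd : Bw.Nondegenerate := by
    refine ⟨?_, fun P hP => Subtype.ext (sympOmega_nondeg_on_ker P.2 fun w hw => by
      rw [sympOmega_comm]; exact hP ⟨w, hw⟩)⟩
    intro P hP
    have hP0 : (P : PV n) = 0 := by
      refine sympOmega_nondeg_on_ker P.2 fun w hw => ?_
      have := hP ⟨w, hw⟩
      rwa [hBw_apply] at this
    exact Subtype.ext hP0
  have hfsurj : Function.Surjective f := by
    intro φ
    have hinj : Function.Injective (Submodule.inclusion hTSW) :=
      Submodule.inclusion_injective hTSW
    obtain ⟨ψ, hψ⟩ := LinearMap.dualMap_surjective_of_injective hinj φ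
    refine ⟨(Bw.toDual hBwnd).symm ψ, ?_⟩
    refine LinearMap.ext fun Q => ?_
    have h1 : Bw ((Bw.toDual hBwnd).symm ψ) (Submodule.inclusion hTSW Q)
        = ψ (Submodule.inclusion hTSW Q) :=
      LinearMap.BilinForm.apply_toDual_symm_apply _ _
    have h2 : ψ (Submodule.inclusion hTSW Q) = φ Q := by
      rw [← hψ]; rfl
    have h3 : f ((Bw.toDual hBwnd).symm ψ) Q
        = Bw ((Bw.toDual hBwnd).symm ψ) (Submodule.inclusion hTSW Q) := rfl
    rw [h3, h1, h2]
  have hrn := LinearMap.finrank_range_add_finrank_ker f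
  rw [LinearMap.range_eq_top.mpr hfsurj, finrank_top] at hrn
  have hdual : Module.finrank (ZMod 2) (Module.Dual (ZMod 2) TS)
      = Module.finrank (ZMod 2) TS := Subspace.dual_finrank_eq
  rw [hdual, hkerf_rank] at hrn
  have hWrank : Module.finrank (ZMod 2) W = 2 * (n - i) := finrank_ker_trunc hi
  rw [hWrank] at hrn
  rw [hCeq]
  omega
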